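/- arXiv:1712.02784 — 10 statements merged into one kernel-verified Lean document; each statement's English description precedes it below -/
import Mathlib

section
/- Let L be a Lagrangian subspace of V ⊕ V*. Then the annihilator of Δ := ρ(L) (inside V*) equals L ∩ V*. -/
/-- The canonical split-signature pairing on `V ⊕ V*`. -/
noncomputable def diracPairing {V : Type*} [AddCommGroup V] [Module ℝ V]
    (x y : V × Module.Dual ℝ V) : ℝ :=
  (x.2 y.1 + y.2 x.1) / 2

/-- `L ⊆ V ⊕ V*` is Lagrangian: `dim L = dim V` and the pairing vanishes on `L`. -/
def IsLagrangian {V : Type*} [AddCommGroup V] [Module ℝ V]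
    (L : Submodule ℝ (V × Module.Dual ℝ V)) : Prop :=
  Module.finrank ℝ L = Module.finrank ℝ V ∧
    ∀ x ∈ L, ∀ y ∈ L, diracPairing x y = 0

/-- For a Lagrangian `L ⊆ V ⊕ V*`, `Ann(Δ) = L ∩ V*`, where `Δ = ρ(L)` is the image of
`L` under the projection to `V`, and `L ∩ V*` is viewed (via the second projection)
as a subspace of `V*`. -/
theorem dualAnnihilator_map_fst_eq_inf
    (V : Type*) [AddCommGroup V] [Module ℝ V] [FiniteDimensional ℝ V]
    (L : Submodule ℝ (V × Module.Dual ℝ V)) (hL : IsLagrangian L) :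
    (Submodule.map (LinearMap.fst ℝ V (Module.Dual ℝ V)) L).dualAnnihilator =
      Submodule.map (LinearMap.snd ℝ V (Module.Dual ℝ V))
        (L ⊓ LinearMap.range (LinearMap.inr ℝ V (Module.Dual ℝ V))) := by
  obtain ⟨hdim, hiso⟩ := hL
  set Δ := Submodule.map (LinearMap.fst ℝ V (Module.Dual ℝ V)) L with hΔ
  set K := Submodule.map (LinearMap.snd ℝ V (Module.Dual ℝ V))
      (L ⊓ LinearMap.range (LinearMap.inr ℝ V (Module.Dual ℝ V))) with hK
  -- easy inclusion K ≤ Ann(Δ)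
  have hle : K ≤ Δ.dualAnnihilator := by
    rintro ξ ⟨⟨a, b⟩, ⟨hxL, ⟨η, hη⟩⟩, rfl⟩
    simp only [Prod.mk.injEq, LinearMap.inr_apply] at hη
    obtain ⟨ha, hb⟩ := hη
    rw [Submodule.mem_dualAnnihilator]
    rintro v ⟨⟨c, d⟩, hyL, rfl⟩
    have := hiso ⟨a, b⟩ hxL ⟨c, d⟩ hyL
    simp only [diracPairing, ← ha] at this ⊢
    have hd : d 0 = 0 := map_zero d
    have hbc : b c = 0 := by linarith
    simpa using hbc
  -- finrank of K equals finrank of L ⊓ range inr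
  have hinj : Function.Injective (LinearMap.inr ℝ V (Module.Dual ℝ V)) :=
    LinearMap.inr_injective
  have hKcomap : K = Submodule.comap (LinearMap.inr ℝ V (Module.Dual ℝ V)) L := by
    rw [hK]
    ext ξ
    constructor
    · rintro ⟨⟨a, b⟩, ⟨hxL, ⟨η, hη⟩⟩, rfl⟩
      simp only [LinearMap.inr_apply, Prod.mk.injEq] at hη
      obtain ⟨ha, hb⟩ := hη
      simpa [Submodule.mem_comap, ← ha, hb] using hxL
    · intro h
      exact ⟨(0, ξ), ⟨h, ⟨ξ, rfl⟩⟩, rfl⟩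
  have hrk1 : Module.finrank ℝ Δ + Module.finrank ℝ K = Module.finrank ℝ V := by
    let f : L →ₗ[ℝ] V := (LinearMap.fst ℝ V (Module.Dual ℝ V)).comp L.subtype
    have hrn := LinearMap.finrank_range_add_finrank_ker (K := ℝ) (V := L) (V₂ := V) f
    have hker : LinearMap.ker f
        = Submodule.comap L.subtype (LinearMap.ker (LinearMap.fst ℝ V (Module.Dual ℝ V))) :=
      LinearMap.ker_comp _ _
    have hrange : LinearMap.range f = Δ := by
      rw [hΔ]
      show LinearMap.range ((LinearMap.fst ℝ V (Module.Dual ℝ V)).comp L.subtype) = _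
      rw [LinearMap.range_comp, Submodule.range_subtype]
    rw [hrange, hdim, hker, ← Submodule.finrank_map_subtype_eq L,
      Submodule.map_comap_subtype, LinearMap.ker_fst] at hrn
    have e1 : Module.finrank ℝ (Submodule.comap (LinearMap.inr ℝ V (Module.Dual ℝ V)) L)
        = Module.finrank ℝ (Submodule.map (LinearMap.inr ℝ V (Module.Dual ℝ V))
          (Submodule.comap (LinearMap.inr ℝ V (Module.Dual ℝ V)) L)) :=
      (Submodule.equivMapOfInjective _ hinj _).finrank_eq
    rw [Submodule.map_comap_eq, inf_comm] at e1
    rw [hKcomap, e1]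
    exact hrn
  have hrk2 : Module.finrank ℝ Δ + Module.finrank ℝ Δ.dualAnnihilator = Module.finrank ℝ V := by
    have e : Module.finrank ℝ (V ⧸ Δ) = Module.finrank ℝ Δ.dualAnnihilator :=
      (Subspace.quotEquivAnnihilator Δ).finrank_eq
    have q := Submodule.finrank_quotient_add_finrank Δ
    omega
  exact (Submodule.eq_of_le_of_finrank_eq hle (by omega)).symm
end

section
/- Let L be a Lagrangian subspace of V ⊕ V* and let Δ = ρ(L). Then there exists a unique alternating bilinear form ε on Δ such that ε(v, w) = ξ(w) for every (v, ξ) ∈ L and every w ∈ Δ. -/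
/-- For a Lagrangian `L ⊆ V ⊕ V*` with `Δ = ρ(L)`, there is a unique alternating
bilinear form `ε` on `Δ` such that `ε(v, w) = ξ(w)` for all `(v, ξ) ∈ L` and `w ∈ Δ`. -/
theorem existsUnique_eps
    (V : Type*) [AddCommGroup V] [Module ℝ V] [FiniteDimensional ℝ V]
    (L : Submodule ℝ (V × Module.Dual ℝ V)) (hL : IsLagrangian L) :
    ∃! ε : (Submodule.map (LinearMap.fst ℝ V (Module.Dual ℝ V)) L) →ₗ[ℝ]
             (Submodule.map (LinearMap.fst ℝ V (Module.Dual ℝ V)) L) →ₗ[ℝ] ℝ,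
      (∀ x, ε x x = 0) ∧
      ∀ (v : V) (ξ : Module.Dual ℝ V) (h : (v, ξ) ∈ L)
        (w : Submodule.map (LinearMap.fst ℝ V (Module.Dual ℝ V)) L),
        ε ⟨v, Submodule.mem_map_of_mem h⟩ w = ξ w := by
  classical
  set Δ := Submodule.map (LinearMap.fst ℝ V (Module.Dual ℝ V)) L with hΔ
  -- a functional appearing over 0 kills all of Δ
  have hzero : ∀ ξ : Module.Dual ℝ V, ((0 : V), ξ) ∈ L → ∀ w : Δ, ξ (w : V) = 0 := by
    intro ξ hξ w
    obtain ⟨y, hy, hy1⟩ := w.2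
    have h := hL.2 _ hξ _ hy
    simp only [diracPairing] at h
    have : ξ y.1 = 0 := by
      have := h
      simp at this
      simpa using this
    rw [← hy1]; exact this
  -- two lifts of the same v agree on Δ
  have huniq : ∀ (v : V) (ξ ξ' : Module.Dual ℝ V), (v, ξ) ∈ L → (v, ξ') ∈ L →
      ∀ w : Δ, ξ (w : V) = ξ' (w : V) := by
    intro v ξ ξ' h h' w
    have hd : ((0 : V), ξ - ξ') ∈ L := by
      have := L.sub_mem h h'
      simpa [Prod.ext_iff] using this
    have := hzero _ hd w
    simp only [LinearMap.sub_apply] at this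
    linarith
  -- choice of lift
  have hlift : ∀ x : Δ, ∃ ξ : Module.Dual ℝ V, ((x : V), ξ) ∈ L := by
    intro x
    obtain ⟨y, hy, hy1⟩ := x.2
    exact ⟨y.2, by simpa [← hy1] using hy⟩
  let ξs : Δ → Module.Dual ℝ V := fun x => Classical.choose (hlift x)
  have hξs : ∀ x : Δ, ((x : V), ξs x) ∈ L := fun x => Classical.choose_spec (hlift x)
  -- any lift of x agrees with ξs x on Δ
  have hval : ∀ (x : Δ) (ξ : Module.Dual ℝ V), ((x : V), ξ) ∈ L →
      ∀ w : Δ, ξs x (w : V) = ξ (w : V) := fun x ξ h w => huniq _ _ _ (hξs x) h w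
  -- construct ε
  let ε : Δ →ₗ[ℝ] Δ →ₗ[ℝ] ℝ := LinearMap.mk₂ ℝ (fun x w => ξs x (w : V))
    (by
      intro x y w
      have hsum : (((x + y : Δ) : V), ξs x + ξs y) ∈ L := by
        have := L.add_mem (hξs x) (hξs y)
        simpa [Prod.ext_iff] using this
      have := hval (x + y) _ hsum w
      simpa using this)
    (by
      intro c x w
      have hsm : (((c • x : Δ) : V), c • ξs x) ∈ L := by
        have := L.smul_mem c (hξs x)
        simpa [Prod.ext_iff] using this
      have := hval (c • x) _ hsm w
      simpa using this)
    (by intro x w w'; simp)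
    (by intro c x w; simp)
  refine ⟨ε, ⟨?_, ?_⟩, ?_⟩
  · intro x
    have h := hL.2 _ (hξs x) _ (hξs x)
    simp only [diracPairing] at h
    have : ξs x (x : V) = 0 := by
      have := h; simp at this; linarith
    simpa [ε] using this
  · intro v ξ h w
    have := hval ⟨v, Submodule.mem_map_of_mem h⟩ ξ h w
    simpa [ε] using this
  · intro ε' ⟨halt', hspec'⟩
    ext x w
    have h1 : ε' x w = ξs x (w : V) := by
      have := hspec' (x : V) (ξs x) (hξs x) w
      convert this using 2
    have h2 : ε x w = ξs x (w : V) := rfl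
    rw [h1, h2]
end

section
/- Let L be a Lagrangian subspace of V ⊕ V* and let Δ̂ = ρ̂(L). Then there exists a unique alternating bilinear form Π on Δ̂ such that Π(ξ, η) = η(v) for every (v, ξ) ∈ L and every η ∈ Δ̂. -/
/-!
Isotropy of `L` makes `(x, y) ↦ y.2 x.1` skew on `L`. Applied to two lifts `(v, ξ)`, `(w, ξ)` of
the same covector, it shows that `η v` does not depend on the lift, since `(v - w, 0) ∈ L`; applied
to `x = y` it gives `ξ v = 0`. A linear choice of lifts `ξ ↦ (g ξ, ξ)`, possible because the surjection `L → Δ̂`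
splits over a field, then defines `Π(ξ, η) = η (g ξ)`, and uniqueness is immediate because
every `ξ ∈ Δ̂` has some lift.
-/

theorem Submodule.exists_linearMap_mk_mem_of_mem_map_snd {K M N : Type*} [DivisionRing K]
    [AddCommGroup M] [Module K M] [AddCommGroup N] [Module K N] (L : Submodule K (M × N)) :
    ∃ g : L.map (LinearMap.snd K M N) →ₗ[K] M, ∀ ξ, (g ξ, (ξ : N)) ∈ L := by
  let F : L →ₗ[K] L.map (LinearMap.snd K M N) :=
    (LinearMap.snd K M N ∘ₗ L.subtype).codRestrict _ fun x => mem_map_of_mem x.2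
  have hF : LinearMap.range F = ⊤ := by
    rw [LinearMap.range_eq_top]
    rintro ⟨_, x, hx, rfl⟩
    exact ⟨⟨x, hx⟩, rfl⟩
  obtain ⟨s, hs⟩ := F.exists_rightInverse_of_surjective hF
  refine ⟨LinearMap.fst K M N ∘ₗ L.subtype ∘ₗ s, fun ξ => ?_⟩
  have hsnd : ((s ξ : L) : M × N).2 = ξ := congrArg Subtype.val (LinearMap.congr_fun hs ξ)
  exact hsnd ▸ (s ξ).2

def DiracIsotropic {V : Type*} [AddCommGroup V] [Module ℝ V]
    (L : Submodule ℝ (V × Module.Dual ℝ V)) : Prop :=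
  ∀ x ∈ L, ∀ y ∈ L, diracPairing x y = 0

namespace DiracIsotropic

variable {V : Type*} [AddCommGroup V] [Module ℝ V] {L : Submodule ℝ (V × Module.Dual ℝ V)}

theorem snd_apply_fst_eq_neg (hL : DiracIsotropic L) {x y : V × Module.Dual ℝ V}
    (hx : x ∈ L) (hy : y ∈ L) : y.2 x.1 = -x.2 y.1 := by
  have h := hL x hx y hy
  rw [diracPairing] at h
  linarith

theorem apply_self_eq_zero (hL : DiracIsotropic L) {v : V} {ξ : Module.Dual ℝ V}
    (h : (v, ξ) ∈ L) : ξ v = 0 := by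
  have h := hL.snd_apply_fst_eq_neg h h
  linarith

theorem apply_eq_of_mem_of_mem (hL : DiracIsotropic L) {v w u : V} {ξ η : Module.Dual ℝ V}
    (hv : (v, ξ) ∈ L) (hw : (w, ξ) ∈ L) (hu : (u, η) ∈ L) : η v = η w := by
  have hdiff : (v - w, (0 : Module.Dual ℝ V)) ∈ L := by simpa using L.sub_mem hv hw
  have h := hL.snd_apply_fst_eq_neg hdiff hu
  simp only [LinearMap.zero_apply, neg_zero, map_sub] at h
  linarith

end DiracIsotropic

theorem existsUnique_pi_general
    (V : Type*) [AddCommGroup V] [Module ℝ V]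
    (L : Submodule ℝ (V × Module.Dual ℝ V)) (hL : IsLagrangian L) :
    ∃! P : (Submodule.map (LinearMap.snd ℝ V (Module.Dual ℝ V)) L) →ₗ[ℝ]
             (Submodule.map (LinearMap.snd ℝ V (Module.Dual ℝ V)) L) →ₗ[ℝ] ℝ,
      (∀ x, P x x = 0) ∧
      ∀ (v : V) (ξ : Module.Dual ℝ V) (h : (v, ξ) ∈ L)
        (η : Submodule.map (LinearMap.snd ℝ V (Module.Dual ℝ V)) L),
        P ⟨ξ, Submodule.mem_map_of_mem h⟩ η = (η : Module.Dual ℝ V) v := by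
  have hiso : DiracIsotropic L := hL.2
  obtain ⟨g, hg⟩ := L.exists_linearMap_mk_mem_of_mem_map_snd
  let P := (LinearMap.applyₗ ∘ₗ g).compl₂ (L.map (LinearMap.snd ℝ V (Module.Dual ℝ V))).subtype
  have hP : ∀ (v : V) (ξ : Module.Dual ℝ V) (h : (v, ξ) ∈ L)
      (η : L.map (LinearMap.snd ℝ V (Module.Dual ℝ V))),
      P ⟨ξ, Submodule.mem_map_of_mem h⟩ η = (η : Module.Dual ℝ V) v := by
    rintro v ξ h ⟨_, ⟨u, η⟩, hu, rfl⟩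
    exact hiso.apply_eq_of_mem_of_mem (hg _) h hu
  refine ⟨P, ⟨?_, hP⟩, ?_⟩
  · rintro ⟨_, ⟨v, ξ⟩, h, rfl⟩
    exact (hP v ξ h _).trans (hiso.apply_self_eq_zero h)
  · rintro Q ⟨-, hQ⟩
    ext ⟨_, ⟨v, ξ⟩, h, rfl⟩ η
    exact (hQ v ξ h η).trans (hP v ξ h η).symm

/-- For a Lagrangian `L ⊆ V ⊕ V*` with `Δ̂ = ρ̂(L)`, there is a unique alternating
bilinear form `Π` on `Δ̂` such that `Π(ξ, η) = η(v)` for all `(v, ξ) ∈ L` and `η ∈ Δ̂`. -/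
theorem existsUnique_pi
    (V : Type*) [AddCommGroup V] [Module ℝ V] [FiniteDimensional ℝ V]
    (L : Submodule ℝ (V × Module.Dual ℝ V)) (hL : IsLagrangian L) :
    ∃! P : (Submodule.map (LinearMap.snd ℝ V (Module.Dual ℝ V)) L) →ₗ[ℝ]
             (Submodule.map (LinearMap.snd ℝ V (Module.Dual ℝ V)) L) →ₗ[ℝ] ℝ,
      (∀ x, P x x = 0) ∧
      ∀ (v : V) (ξ : Module.Dual ℝ V) (h : (v, ξ) ∈ L)
        (η : Submodule.map (LinearMap.snd ℝ V (Module.Dual ℝ V)) L),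
        P ⟨ξ, Submodule.mem_map_of_mem h⟩ η = (η : Module.Dual ℝ V) v :=
  existsUnique_pi_general V L hL
end

section
/- Let Δ be a subspace of V and ε an alternating bilinear form on Δ. Then L(Δ,ε) := {(v, ξ) ∈ V ⊕ V* : v ∈ Δ and ξ(w) = ε(v, w) for all w ∈ Δ} is a Lagrangian subspace of V ⊕ V*, and its projection to V equals Δ. -/
/-!
`L(Δ, ε)` is the image of the kernel of `Φ : Δ × V* → Δ*, (v, ξ) ↦ ξ|_Δ - ε v` under the
inclusion `Δ × V* ↪ V × V*`. Restriction `V* → Δ*` is surjective, hence so is `Φ`, and rank–nullity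
gives `dim L = (dim Δ + dim V) - dim Δ = dim V`; the same surjectivity lets every `v ∈ Δ` be
completed to a point `(v, ξ)` of `L`. Isotropy is antisymmetry of `ε`: on `L`,
`ξ(w) + η(v) = ε(v, w) + ε(w, v) = 0`.
-/

open Module

section GraphOfForm

variable {K V : Type*} [CommRing K] [AddCommGroup V] [Module K V]
  (Δ : Submodule K V) (ε : Δ →ₗ[K] Δ →ₗ[K] K)

noncomputable def graphDefect : Δ × Dual K V →ₗ[K] Dual K Δ :=
  Δ.dualRestrict ∘ₗ LinearMap.snd K Δ (Dual K V) - ε ∘ₗ LinearMap.fst K Δ (Dual K V)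

noncomputable def graphOfForm : Submodule K (V × Dual K V) :=
  (LinearMap.ker (graphDefect Δ ε)).map (Δ.subtype.prodMap LinearMap.id)

variable {Δ ε}

theorem mem_graphOfForm {p : V × Dual K V} :
    p ∈ graphOfForm Δ ε ↔ ∃ h : p.1 ∈ Δ, ∀ w : Δ, p.2 w = ε ⟨p.1, h⟩ w := by
  constructor
  · rintro ⟨⟨v, ξ⟩, hker, rfl⟩
    refine ⟨v.2, fun w => ?_⟩
    simpa [graphDefect, sub_eq_zero] using LinearMap.congr_fun (LinearMap.mem_ker.1 hker) w
  · rintro ⟨hp, hξ⟩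
    refine ⟨(⟨p.1, hp⟩, p.2), LinearMap.mem_ker.2 (LinearMap.ext fun w => ?_), rfl⟩
    simp [graphDefect, hξ]

theorem graphOfForm_apply_add_apply_eq_zero (hε : ε.IsAlt) {p q : V × Dual K V}
    (hp : p ∈ graphOfForm Δ ε) (hq : q ∈ graphOfForm Δ ε) : p.2 q.1 + q.2 p.1 = 0 := by
  obtain ⟨hp₁, hp₂⟩ := mem_graphOfForm.1 hp
  obtain ⟨hq₁, hq₂⟩ := mem_graphOfForm.1 hq
  rw [hp₂ ⟨q.1, hq₁⟩, hq₂ ⟨p.1, hp₁⟩, ← hε.neg, neg_add_cancel]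

end GraphOfForm

section FieldGraphOfForm

variable {K V : Type*} [Field K] [AddCommGroup V] [Module K V]
  (Δ : Submodule K V) (ε : Δ →ₗ[K] Δ →ₗ[K] K)

theorem graphDefect_surjective : Function.Surjective (graphDefect Δ ε) := by
  intro φ
  obtain ⟨ξ, rfl⟩ := Subspace.dualRestrict_surjective (W := Δ) φ
  exact ⟨(0, ξ), by simp [graphDefect]⟩

theorem finrank_graphOfForm [FiniteDimensional K V] :
    finrank K (graphOfForm Δ ε) = finrank K V := by
  have hinj : Function.Injective (Δ.subtype.prodMap (LinearMap.id : Dual K V →ₗ[K] Dual K V)) :=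
    Δ.injective_subtype.prodMap Function.injective_id
  have hrank := LinearMap.finrank_range_add_finrank_ker (graphDefect Δ ε)
  rw [LinearMap.range_eq_top.2 (graphDefect_surjective Δ ε), finrank_top, finrank_prod,
    Subspace.dual_finrank_eq, Subspace.dual_finrank_eq] at hrank
  rw [graphOfForm, ← (Submodule.equivMapOfInjective _ hinj _).finrank_eq]
  omega

theorem map_fst_graphOfForm : (graphOfForm Δ ε).map (LinearMap.fst K V (Dual K V)) = Δ := by
  ext v
  simp only [Submodule.mem_map, LinearMap.fst_apply, Prod.exists, exists_and_right,
    exists_eq_right]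
  constructor
  · rintro ⟨ξ, hξ⟩
    exact (mem_graphOfForm.1 hξ).1
  · intro hv
    obtain ⟨ξ, hξ⟩ := Subspace.dualRestrict_surjective (W := Δ) (ε ⟨v, hv⟩)
    exact ⟨ξ, mem_graphOfForm.2 ⟨hv, fun w => by rw [← hξ]; rfl⟩⟩

end FieldGraphOfForm

/-- Given a subspace `Δ ⊆ V` and an alternating bilinear form `ε` on `Δ`, the set
`L(Δ,ε) = {(v,ξ) : v ∈ Δ, ξ|_Δ = ε(v,·)}` is a Lagrangian subspace of `V ⊕ V*`
whose projection to `V` equals `Δ`. -/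
theorem graph_of_form_is_lagrangian
    (V : Type*) [AddCommGroup V] [Module ℝ V] [FiniteDimensional ℝ V]
    (Δ : Submodule ℝ V) (ε : Δ →ₗ[ℝ] Δ →ₗ[ℝ] ℝ) (halt : ∀ x, ε x x = 0) :
    ∃ L : Submodule ℝ (V × Module.Dual ℝ V),
      (L : Set (V × Module.Dual ℝ V)) =
        {p | ∃ h : p.1 ∈ Δ, ∀ w : Δ, p.2 w = ε ⟨p.1, h⟩ w} ∧
      IsLagrangian L ∧
      Submodule.map (LinearMap.fst ℝ V (Module.Dual ℝ V)) L = Δ := by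
  refine ⟨graphOfForm Δ ε, Set.ext fun _ => mem_graphOfForm,
    ⟨finrank_graphOfForm Δ ε, fun p hp q hq => ?_⟩, map_fst_graphOfForm Δ ε⟩
  rw [diracPairing, graphOfForm_apply_add_apply_eq_zero halt hp hq, zero_div]
end

section
/- (Proposition 2.1, second bijection.) The assignment (Δ̂, Π) ↦ L(Δ̂,Π) := {(v, ξ) ∈ V ⊕ V* : ξ ∈ Δ̂ and η(v) = Π(ξ, η) for all η ∈ Δ̂} is a bijection from the set of pairs (Δ̂, Π), where Δ̂ is a subspace of V* and Π is an alternating bilinear form on Δ̂, onto the set of Lagrangian subspaces of V ⊕ V*. -/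
/-- The underlying set of `L(Δ̂,Π) = {(v,ξ) : ξ ∈ Δ̂, η(v) = Π(ξ,η) for all η ∈ Δ̂}`. -/
def cographSet {V : Type*} [AddCommGroup V] [Module ℝ V]
    (p : (D : Submodule ℝ (Module.Dual ℝ V)) × {P : D →ₗ[ℝ] D →ₗ[ℝ] ℝ // ∀ x, P x x = 0}) :
    Set (V × Module.Dual ℝ V) :=
  {q | ∃ h : q.2 ∈ p.1, ∀ η : p.1, (η : Module.Dual ℝ V) q.1 = p.2.1 ⟨q.2, h⟩ η}

/-! A Lagrangian `L` determines `Δ̂` as its projection to `V*` and `Π(ξ, η) = η(v)`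
for any `(v, ξ) ∈ L`; isotropy of `L` makes this independent of `v` and alternating, so
`L ⊆ L(Δ̂,Π)`, with equality because both have dimension `n`. For that dimension count,
`L(Δ̂,Π) → Δ̂` is onto with kernel the annihilator `Δ̂⁰ ⊆ V`, and `dim Δ̂ + dim Δ̂⁰ = n`.
The same surjectivity shows that `L(Δ̂,Π)` determines `Δ̂` and then `Π`. -/

open Module

theorem Submodule.finrank_map_add_finrank_inf_ker {K M N : Type*} [DivisionRing K]
    [AddCommGroup M] [Module K M] [AddCommGroup N] [Module K N] [FiniteDimensional K M]
    (L : Submodule K M) (f : M →ₗ[K] N) :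
    finrank K (L.map f) + finrank K ↥(L ⊓ LinearMap.ker f) = finrank K L := by
  rw [← LinearMap.range_domRestrict, ← Submodule.map_comap_subtype,
    Submodule.finrank_map_subtype_eq, ← LinearMap.ker_domRestrict]
  exact LinearMap.finrank_range_add_finrank_ker _

section Cograph

variable {K V : Type*} [Field K] [AddCommGroup V] [Module K V]

theorem dualRestrict_comp_eval_surjective [FiniteDimensional K V] (D : Submodule K (Dual K V)) :
    Function.Surjective (D.dualRestrict ∘ₗ Dual.eval K V) :=
  Subspace.dualRestrict_surjective.comp (bijective_dual_eval K V).2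

-- `L(Δ̂,Π)` as the image of the kernel of `(v, ξ) ↦ v|_Δ̂ - Π ξ` on `V × Δ̂`; see `mem_cograph`.
def cograph (D : Submodule K (Dual K V)) (P : D →ₗ[K] D →ₗ[K] K) :
    Submodule K (V × Dual K V) :=
  (LinearMap.ker ((D.dualRestrict ∘ₗ Dual.eval K V).coprod (-P))).map
    (LinearMap.prodMap LinearMap.id D.subtype)

variable {D : Submodule K (Dual K V)} {P : D →ₗ[K] D →ₗ[K] K}

theorem mem_cograph {q : V × Dual K V} :
    q ∈ cograph D P ↔ ∃ h : q.2 ∈ D, ∀ η : D, (η : Dual K V) q.1 = P ⟨q.2, h⟩ η := by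
  constructor
  · rintro ⟨⟨v, ξ⟩, hker, rfl⟩
    refine ⟨ξ.2, fun η => ?_⟩
    simpa [sub_eq_zero, ← sub_eq_add_neg] using LinearMap.congr_fun (LinearMap.mem_ker.1 hker) η
  · rintro ⟨h, hq⟩
    exact ⟨(q.1, ⟨q.2, h⟩), LinearMap.mem_ker.2 (LinearMap.ext fun η => by simp [hq]), rfl⟩

theorem cograph_inf_ker_snd :
    cograph D P ⊓ LinearMap.ker (LinearMap.snd K V (Dual K V)) =
      D.dualCoannihilator.map (LinearMap.inl K V (Dual K V)) := by
  have hP0 : P ⟨0, D.zero_mem⟩ = 0 := map_zero P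
  ext ⟨v, ξ⟩
  simp only [Submodule.mem_inf, mem_cograph, LinearMap.mem_ker, LinearMap.snd_apply,
    Submodule.mem_map, LinearMap.inl_apply, Prod.mk.injEq, Submodule.mem_dualCoannihilator]
  constructor
  · rintro ⟨⟨_, hv⟩, rfl⟩
    exact ⟨v, fun η hη => by simpa [hP0] using hv ⟨η, hη⟩, rfl, rfl⟩
  · rintro ⟨v, hv, rfl, rfl⟩
    exact ⟨⟨D.zero_mem, fun η => by simpa [hP0] using hv η η.2⟩, rfl⟩

variable [FiniteDimensional K V]

theorem map_snd_cograph : (cograph D P).map (LinearMap.snd K V (Dual K V)) = D := by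
  refine le_antisymm (fun ξ ⟨q, hq, hξ⟩ => hξ ▸ (mem_cograph.1 hq).1) fun ξ hξ => ?_
  obtain ⟨v, hv⟩ := dualRestrict_comp_eval_surjective D (P ⟨ξ, hξ⟩)
  exact ⟨(v, ξ), mem_cograph.2 ⟨hξ, fun η => LinearMap.congr_fun hv η⟩, rfl⟩

theorem finrank_cograph : finrank K (cograph D P) = finrank K V := by
  rw [← (cograph D P).finrank_map_add_finrank_inf_ker (LinearMap.snd K V (Dual K V)),
    map_snd_cograph, cograph_inf_ker_snd,
    (Submodule.equivMapOfInjective _ LinearMap.inl_injective _).finrank_eq.symm]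
  exact Subspace.finrank_add_finrank_dualCoannihilator_eq D

theorem cograph_injective (D : Submodule K (Dual K V)) :
    Function.Injective (cograph (V := V) D) := by
  intro P P' h
  ext ξ η
  obtain ⟨v, hv⟩ := dualRestrict_comp_eval_surjective D (P ξ)
  have hmem : (v, (ξ : Dual K V)) ∈ cograph D P' :=
    h ▸ mem_cograph.2 ⟨ξ.2, fun η => LinearMap.congr_fun hv η⟩
  rw [← LinearMap.congr_fun hv η]
  exact (mem_cograph.1 hmem).2 η

theorem cograph_sigma_injective :
    Function.Injective fun p : (D : Submodule K (Dual K V)) ×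
      {P : D →ₗ[K] D →ₗ[K] K // ∀ x, P x x = 0} => cograph p.1 p.2.1 := by
  rintro ⟨D, P, hP⟩ ⟨D', P', hP'⟩ h
  obtain rfl : D = D' := by
    simpa only [map_snd_cograph] using congrArg (Submodule.map (LinearMap.snd K V (Dual K V))) h
  obtain rfl : P = P' := cograph_injective D h
  rfl

end Cograph

section Lagrangian

variable {V : Type*} [AddCommGroup V] [Module ℝ V]

theorem coe_cograph (p : (D : Submodule ℝ (Dual ℝ V)) × {P : D →ₗ[ℝ] D →ₗ[ℝ] ℝ // ∀ x, P x x = 0}) :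
    (cograph p.1 p.2.1 : Set (V × Dual ℝ V)) = cographSet p :=
  Set.ext fun _ => mem_cograph

theorem diracPairing_eq_zero_iff {x y : V × Dual ℝ V} :
    diracPairing x y = 0 ↔ x.2 y.1 + y.2 x.1 = 0 := by
  simp [diracPairing]

theorem cograph_isotropic {D : Submodule ℝ (Dual ℝ V)} {P : D →ₗ[ℝ] D →ₗ[ℝ] ℝ} (hP : P.IsAlt) :
    ∀ x ∈ cograph D P, ∀ y ∈ cograph D P, diracPairing x y = 0 := by
  intro x hx y hy
  obtain ⟨hx, hxP⟩ := mem_cograph.1 hx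
  obtain ⟨hy, hyP⟩ := mem_cograph.1 hy
  rw [diracPairing_eq_zero_iff, hyP ⟨x.2, hx⟩, hxP ⟨y.2, hy⟩, ← hP.neg, neg_add_cancel]

theorem cograph_isLagrangian [FiniteDimensional ℝ V] {D : Submodule ℝ (Dual ℝ V)}
    {P : D →ₗ[ℝ] D →ₗ[ℝ] ℝ} (hP : P.IsAlt) :
    IsLagrangian (cograph D P) :=
  ⟨finrank_cograph, cograph_isotropic hP⟩

theorem apply_fst_eq_of_snd_eq {L : Submodule ℝ (V × Dual ℝ V)}
    (hL : ∀ x ∈ L, ∀ y ∈ L, diracPairing x y = 0) {x y z : V × Dual ℝ V}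
    (hx : x ∈ L) (hy : y ∈ L) (hz : z ∈ L) (hxy : x.2 = y.2) : z.2 x.1 = z.2 y.1 := by
  have := diracPairing_eq_zero_iff.1 (hL _ (L.sub_mem hx hy) _ hz)
  rwa [Prod.snd_sub, hxy, sub_self, LinearMap.zero_apply, zero_add, Prod.fst_sub, map_sub,
    sub_eq_zero] at this

-- `Π(ξ, η) := η(v)` for `(v, ξ) = σ ξ`, where `σ` is a linear section of the projection `L → Δ̂`.
theorem exists_isAlt_le_cograph {L : Submodule ℝ (V × Dual ℝ V)}
    (hL : ∀ x ∈ L, ∀ y ∈ L, diracPairing x y = 0) :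
    ∃ (D : Submodule ℝ (Dual ℝ V)) (P : D →ₗ[ℝ] D →ₗ[ℝ] ℝ), P.IsAlt ∧ L ≤ cograph D P := by
  set D := L.map (LinearMap.snd ℝ V (Dual ℝ V))
  have : Module.Free ℝ D := Module.Free.of_divisionRing ℝ D
  obtain ⟨σ, hσ⟩ :=
    ((LinearMap.snd ℝ V (Dual ℝ V)).submoduleMap L).exists_rightInverse_of_surjective
      (LinearMap.range_eq_top.2 (LinearMap.submoduleMap_surjective _ L))
  have hσ_snd (ξ : D) : (σ ξ : V × Dual ℝ V).2 = ξ :=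
    congrArg Subtype.val (LinearMap.congr_fun hσ ξ)
  refine ⟨D, (D.dualRestrict ∘ₗ Dual.eval ℝ V) ∘ₗ LinearMap.fst ℝ V (Dual ℝ V) ∘ₗ L.subtype ∘ₗ σ,
    fun ξ => ?_, fun x hx => mem_cograph.2 ⟨⟨x, hx, rfl⟩, fun η => ?_⟩⟩
  · have := diracPairing_eq_zero_iff.1 (hL _ (σ ξ).2 _ (σ ξ).2)
    simpa [hσ_snd] using this
  · obtain ⟨z, hz, hzη⟩ := η.2
    simp only [LinearMap.comp_apply, Submodule.dualRestrict_apply, Dual.eval_apply]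
    rw [← hzη]
    exact apply_fst_eq_of_snd_eq hL hx (σ _).2 hz (hσ_snd ⟨_, x, hx, rfl⟩).symm

end Lagrangian

/-- Proposition 2.1, second bijection: `(Δ̂, Π) ↦ L(Δ̂,Π)` is a bijection from pairs
of a subspace `Δ̂ ⊆ V*` with an alternating bilinear form `Π` on `Δ̂`, onto the set
of Lagrangian subspaces of `V ⊕ V*`. -/
theorem lagrangian_classification_bivectors
    (V : Type*) [AddCommGroup V] [Module ℝ V] [FiniteDimensional ℝ V] :
    (∀ p : (D : Submodule ℝ (Module.Dual ℝ V)) × {P : D →ₗ[ℝ] D →ₗ[ℝ] ℝ // ∀ x, P x x = 0},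
      ∃ L : Submodule ℝ (V × Module.Dual ℝ V),
        (L : Set (V × Module.Dual ℝ V)) = cographSet p ∧ IsLagrangian L) ∧
    (∀ L : Submodule ℝ (V × Module.Dual ℝ V), IsLagrangian L →
      ∃! p : (D : Submodule ℝ (Module.Dual ℝ V)) × {P : D →ₗ[ℝ] D →ₗ[ℝ] ℝ // ∀ x, P x x = 0},
        (L : Set (V × Module.Dual ℝ V)) = cographSet p) := by
  refine ⟨fun p => ⟨_, coe_cograph p, cograph_isLagrangian p.2.2⟩, fun L hL => ?_⟩
  obtain ⟨D, P, hP, hle⟩ := exists_isAlt_le_cograph hL.2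
  have hL_eq : L = cograph D P :=
    Submodule.eq_of_le_of_finrank_eq hle (by rw [hL.1, finrank_cograph])
  subst hL_eq
  refine ⟨⟨D, P, hP⟩, coe_cograph ⟨D, P, hP⟩, fun p hp => cograph_sigma_injective ?_⟩
  exact SetLike.coe_injective ((coe_cograph p).trans hp.symm)
end

section
/- A Lagrangian subspace L of V ⊕ V* satisfies L ∩ V = 0 if and only if there exists an alternating bilinear form Π on V* with L = Graph(Π) := {(v, ξ) : ξ ∈ V* and η(v) = Π(ξ, η) for all η ∈ V*}. -/
/-!
Since `dim L = dim V = dim V*`, the condition `L ∩ V = 0` says exactly that the projection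
`L → V*` is an isomorphism, i.e. that `L = {(f ξ, ξ)}` for a linear map `f : V* → V`. Then
`Π(ξ, η) = η (f ξ)` describes `L`, and isotropy of `L` gives `Π(ξ, ξ) = ξ (f ξ) = 0`.
Conversely, on the graph of any `Π` the vector `(v, 0)` satisfies `η v = Π(0, η) = 0` for all `η`.
-/

open Module

namespace Submodule

variable {R M N : Type*} [Ring R] [AddCommGroup M] [Module R M] [AddCommGroup N] [Module R N]

theorem inf_range_inl_eq_bot_iff_injective_snd (L : Submodule R (M × N)) :
    L ⊓ LinearMap.range (LinearMap.inl R M N) = ⊥ ↔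
      Function.Injective (LinearMap.snd R M N ∘ₗ L.subtype) := by
  rw [← LinearMap.ker_eq_bot, LinearMap.ker_comp, ← disjoint_iff_comap_eq_bot,
    LinearMap.range_inl, disjoint_iff]

theorem exists_forall_mem_iff_fst_eq_of_bijective_snd {L : Submodule R (M × N)}
    (h : Function.Bijective (LinearMap.snd R M N ∘ₗ L.subtype)) :
    ∃ f : N →ₗ[R] M, ∀ q : M × N, q ∈ L ↔ q.1 = f q.2 := by
  let e := LinearEquiv.ofBijective _ h
  refine ⟨LinearMap.fst R M N ∘ₗ L.subtype ∘ₗ e.symm.toLinearMap, fun q =>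
    ⟨fun hq => ?_, fun hq => ?_⟩⟩
  · have : e.symm q.2 = ⟨q, hq⟩ := e.symm_apply_eq.mpr rfl
    simp [this]
  · have hsnd : (e.symm q.2 : M × N).2 = q.2 := e.apply_symm_apply q.2
    have : (e.symm q.2 : M × N) = q := Prod.ext hq.symm hsnd
    exact this ▸ (e.symm q.2).2

end Submodule

section DualGraph

variable {K V : Type*} [Field K] [AddCommGroup V] [Module K V]

theorem forall_apply_fst_eq_eval_comp_iff (f : Dual K V →ₗ[K] V) (q : V × Dual K V) :
    (∀ η : Dual K V, η q.1 = (Dual.eval K V ∘ₗ f) q.2 η) ↔ q.1 = f q.2 := by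
  rw [← (eval_apply_injective K).eq_iff, LinearMap.ext_iff]
  rfl

theorem inf_range_inl_eq_bot_of_coe_eq_graph {L : Submodule K (V × Dual K V)}
    {P : Dual K V →ₗ[K] Dual K V →ₗ[K] K}
    (hL : (L : Set (V × Dual K V)) = {q | ∀ η : Dual K V, η q.1 = P q.2 η}) :
    L ⊓ LinearMap.range (LinearMap.inl K V (Dual K V)) = ⊥ := by
  refine (Submodule.eq_bot_iff _).mpr ?_
  rintro _ ⟨hxL, v, rfl⟩
  have hgraph : ∀ η : Dual K V, η v = P 0 η := (Set.ext_iff.mp hL _).mp hxL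
  simpa using (forall_dual_apply_eq_zero_iff K v).mp fun η => by simpa using hgraph η

end DualGraph

namespace IsLagrangian

variable {V : Type*} [AddCommGroup V] [Module ℝ V] {L : Submodule ℝ (V × Dual ℝ V)}

theorem snd_apply_fst_eq_zero (hL : IsLagrangian L) {q : V × Dual ℝ V} (hq : q ∈ L) :
    q.2 q.1 = 0 := by
  have := hL.2 q hq q hq
  rw [diracPairing] at this
  linarith

theorem bijective_snd_of_injective [FiniteDimensional ℝ V] (hL : IsLagrangian L)
    (h : Function.Injective (LinearMap.snd ℝ V (Dual ℝ V) ∘ₗ L.subtype)) :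
    Function.Bijective (LinearMap.snd ℝ V (Dual ℝ V) ∘ₗ L.subtype) := by
  have hdim : finrank ℝ L = finrank ℝ (Dual ℝ V) := hL.1.trans Subspace.dual_finrank_eq.symm
  exact ⟨h,
    (LinearMap.injective_iff_surjective_of_finrank_eq_finrank (K := ℝ) (V := L) hdim).mp h⟩

end IsLagrangian

/-- A Lagrangian `L ⊆ V ⊕ V*` satisfies `L ∩ V = 0` if and only if `L` is the graph
`{(v, ξ) : η(v) = Π(ξ, η) for all η ∈ V*}` of an alternating bilinear form `Π` on `V*`. -/
theorem lagrangian_inf_tangent_eq_bot_iff_graph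
    (V : Type*) [AddCommGroup V] [Module ℝ V] [FiniteDimensional ℝ V]
    (L : Submodule ℝ (V × Module.Dual ℝ V)) (hL : IsLagrangian L) :
    L ⊓ LinearMap.range (LinearMap.inl ℝ V (Module.Dual ℝ V)) = ⊥ ↔
      ∃ P : Module.Dual ℝ V →ₗ[ℝ] Module.Dual ℝ V →ₗ[ℝ] ℝ, (∀ ξ, P ξ ξ = 0) ∧
        (L : Set (V × Module.Dual ℝ V)) =
          {q | ∀ η : Module.Dual ℝ V, η q.1 = P q.2 η} := by
  constructor
  · intro hbot
    obtain ⟨f, hf⟩ := Submodule.exists_forall_mem_iff_fst_eq_of_bijective_snd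
      (hL.bijective_snd_of_injective (L.inf_range_inl_eq_bot_iff_injective_snd.mp hbot))
    refine ⟨Dual.eval ℝ V ∘ₗ f, fun ξ => hL.snd_apply_fst_eq_zero ((hf (f ξ, ξ)).mpr rfl), ?_⟩
    ext q
    exact (hf q).trans (forall_apply_fst_eq_eval_comp_iff f q).symm
  · rintro ⟨P, -, hP⟩
    exact inf_range_inl_eq_bot_of_coe_eq_graph hP
end

section
/- For every Lagrangian subspace L of V ⊕ V*, the integer dim ρ(L) − dim(L ∩ V) is even; equivalently, n − dim(L ∩ V) − dim(L ∩ V*) is even. -/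
/-!
The form `B(x, y) = ξ(w)` for `x = (v, ξ)`, `y = (w, η)` restricts to an alternating form on a
Lagrangian `L`, because `ξ(w) + η(v) = 0` there. Its kernel is `(L ∩ V) ⊕ (L ∩ V*)`: the
annihilator of `ρ(L)` is `{ξ | (0, ξ) ∈ L}`, as both have dimension `n - dim ρ(L)`. An alternating
form has even rank, so `n - dim(L ∩ V) - dim(L ∩ V*)` is even, and `dim ρ(L) = n - dim(L ∩ V*)`.
-/

open Module LinearMap

theorem Matrix.det_eq_zero_of_transpose_eq_neg {n R : Type*} [Fintype n] [DecidableEq n]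
    [CommRing R] [NoZeroDivisors R] [NeZero (2 : R)] {M : Matrix n n R} (hM : M.transpose = -M)
    (hn : Odd (Fintype.card n)) : M.det = 0 := by
  have hdet : M.det = -M.det :=
    calc M.det = M.transpose.det := M.det_transpose.symm
      _ = -M.det := by rw [hM, Matrix.det_neg, hn.neg_one_pow, neg_one_mul]
  have h2 : (2 : R) * M.det = 0 := by linear_combination hdet
  exact (mul_eq_zero.mp h2).resolve_left two_ne_zero

namespace LinearMap.BilinForm

variable {K E : Type*} [Field K] [AddCommGroup E] [Module K E] [FiniteDimensional K E]
  {B : LinearMap.BilinForm K E}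

theorem IsAlt.even_finrank_of_nondegenerate [NeZero (2 : K)] (hB : B.IsAlt)
    (hnd : B.Nondegenerate) : Even (finrank K E) := by
  let b := finBasis K E
  have htr : (toMatrix b B).transpose = -toMatrix b B := by
    ext i j
    simp [toMatrix_apply, ← hB.neg_eq (b i) (b j)]
  by_contra hodd
  refine (nondegenerate_iff_det_ne_zero b).mp hnd (Matrix.det_eq_zero_of_transpose_eq_neg htr ?_)
  simpa using Nat.not_even_iff_odd.mp hodd

theorem IsRefl.nondegenerate_restrict_of_isCompl_ker (hB : B.IsRefl) {W : Submodule K E}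
    (hW : IsCompl (LinearMap.ker B) W) : (B.restrict W).Nondegenerate := by
  refine .ofSeparatingLeft fun x hx => ?_
  have hle : LinearMap.ker B ⊔ W ≤ LinearMap.ker (B x) :=
    sup_le (fun k hk => hB _ _ (by simp [LinearMap.mem_ker.mp hk])) (fun w hw => hx ⟨w, hw⟩)
  rw [hW.sup_eq_top, top_le_iff, LinearMap.ker_eq_top] at hle
  exact Subtype.ext ((Submodule.mem_bot K).mp (hW.disjoint.le_bot ⟨hle, x.2⟩))

theorem IsAlt.even_finrank_range [NeZero (2 : K)] (hB : B.IsAlt) :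
    Even (finrank K (LinearMap.range B)) := by
  obtain ⟨W, hW⟩ := (LinearMap.ker B).exists_isCompl
  have hW_even : Even (finrank K W) :=
    IsAlt.even_finrank_of_nondegenerate (fun x => hB x)
      (hB.isRefl.nondegenerate_restrict_of_isCompl_ker hW)
  have hnullity := LinearMap.finrank_range_add_finrank_ker B
  have hcompl := Submodule.finrank_add_eq_of_isCompl hW
  rwa [show finrank K (LinearMap.range B) = finrank K W by omega]

end LinearMap.BilinForm

namespace Submodule

variable {K M N : Type*} [DivisionRing K] [AddCommGroup M] [Module K M] [AddCommGroup N]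
  [Module K N]

theorem finrank_inf_range_of_injective (p : Submodule K N) {f : M →ₗ[K] N}
    (hf : Function.Injective f) : finrank K ↥(p ⊓ range f) = finrank K (p.comap f) := by
  rw [inf_comm, ← map_comap_eq]
  exact (equivMapOfInjective f hf _).finrank_eq.symm

theorem mem_inf_range_inl_sup_inf_range_inr_iff {p : Submodule K (M × N)} {x : M × N}
    (hx : x ∈ p) :
    x ∈ p ⊓ range (LinearMap.inl K M N) ⊔ p ⊓ range (LinearMap.inr K M N) ↔
      LinearMap.inr K M N x.2 ∈ p := by
  constructor
  · intro h
    obtain ⟨a, ⟨-, v, rfl⟩, b, ⟨hb, ξ, rfl⟩, rfl⟩ := mem_sup.mp h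
    simpa using hb
  · intro h
    have hinl : LinearMap.inl K M N x.1 ∈ p := by
      convert p.sub_mem hx h using 1
      ext <;> simp
    exact mem_sup.mpr ⟨_, ⟨hinl, mem_range_self _ _⟩, _, ⟨h, mem_range_self _ _⟩, by simp⟩

variable [FiniteDimensional K M] [FiniteDimensional K N] (p : Submodule K (M × N))

theorem finrank_map_fst_add_finrank_inf_range_inr :
    finrank K (p.map (LinearMap.fst K M N)) + finrank K ↥(p ⊓ range (LinearMap.inr K M N)) =
      finrank K p := by
  have hnullity := finrank_range_add_finrank_ker ((LinearMap.fst K M N).domRestrict p)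
  rwa [range_domRestrict, ker_domRestrict, ker_fst, ← finrank_map_subtype_eq,
    map_comap_subtype] at hnullity

theorem finrank_inf_range_inl_sup_inf_range_inr :
    finrank K ↥(p ⊓ range (LinearMap.inl K M N) ⊔ p ⊓ range (LinearMap.inr K M N)) =
      finrank K ↥(p ⊓ range (LinearMap.inl K M N)) +
        finrank K ↥(p ⊓ range (LinearMap.inr K M N)) := by
  have hdisj : Disjoint (p ⊓ range (LinearMap.inl K M N)) (p ⊓ range (LinearMap.inr K M N)) :=
    disjoint_inl_inr.mono inf_le_right inf_le_right
  rw [← finrank_sup_add_finrank_inf_eq, hdisj.eq_bot, finrank_bot, add_zero]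

end Submodule

def dualEvalForm (R V : Type*) [CommSemiring R] [AddCommMonoid V] [Module R V] :
    LinearMap.BilinForm R (V × Dual R V) :=
  (LinearMap.fst R V (Dual R V)).dualMap ∘ₗ LinearMap.snd R V (Dual R V)

@[simp]
theorem dualEvalForm_apply {R V : Type*} [CommSemiring R] [AddCommMonoid V] [Module R V]
    (x y : V × Dual R V) : dualEvalForm R V x y = x.2 y.1 :=
  rfl

namespace IsLagrangian

variable {V : Type*} [AddCommGroup V] [Module ℝ V] {L : Submodule ℝ (V × Dual ℝ V)}

theorem snd_apply_fst_add_snd_apply_fst (hL : IsLagrangian L) {x y : V × Dual ℝ V}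
    (hx : x ∈ L) (hy : y ∈ L) : x.2 y.1 + y.2 x.1 = 0 := by
  have h := hL.2 x hx y hy
  rw [diracPairing] at h
  linarith

theorem isAlt_restrict_dualEvalForm (hL : IsLagrangian L) :
    LinearMap.BilinForm.IsAlt ((dualEvalForm ℝ V).restrict L) := fun x => by
  simpa [← two_mul] using hL.snd_apply_fst_add_snd_apply_fst x.2 x.2

variable [FiniteDimensional ℝ V]

theorem dualAnnihilator_map_fst (hL : IsLagrangian L) :
    (L.map (LinearMap.fst ℝ V (Dual ℝ V))).dualAnnihilator =
      L.comap (LinearMap.inr ℝ V (Dual ℝ V)) := by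
  refine (Submodule.eq_of_le_of_finrank_le ?_ ?_).symm
  · intro ξ hξ
    rw [Submodule.mem_dualAnnihilator]
    rintro _ ⟨y, hy, rfl⟩
    simpa using hL.snd_apply_fst_add_snd_apply_fst hξ hy
  · have hann := Subspace.finrank_add_finrank_dualAnnihilator_eq
      (L.map (LinearMap.fst ℝ V (Dual ℝ V)))
    have hfst := L.finrank_map_fst_add_finrank_inf_range_inr
    rw [L.finrank_inf_range_of_injective LinearMap.inr_injective, hL.1] at hfst
    omega

theorem ker_restrict_dualEvalForm (hL : IsLagrangian L) :
    LinearMap.ker ((dualEvalForm ℝ V).restrict L) =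
      (L ⊓ range (LinearMap.inl ℝ V (Dual ℝ V)) ⊔ L ⊓ range (LinearMap.inr ℝ V (Dual ℝ V))).comap
        L.subtype := by
  ext x
  rw [Submodule.mem_comap, L.subtype_apply, Submodule.mem_inf_range_inl_sup_inf_range_inr_iff x.2,
    ← Submodule.mem_comap, ← hL.dualAnnihilator_map_fst, Submodule.mem_dualAnnihilator]
  simp [LinearMap.ext_iff]

end IsLagrangian

/-- For a Lagrangian `L ⊆ V ⊕ V*`, the integer `dim ρ(L) − dim(L ∩ V)` is even;
equivalently, `n − dim(L ∩ V) − dim(L ∩ V*)` is even. -/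
theorem lagrangian_parity
    (V : Type*) [AddCommGroup V] [Module ℝ V] [FiniteDimensional ℝ V]
    (L : Submodule ℝ (V × Module.Dual ℝ V)) (hL : IsLagrangian L) :
    Even ((Module.finrank ℝ ↥(Submodule.map (LinearMap.fst ℝ V (Module.Dual ℝ V)) L) : ℤ) -
        Module.finrank ℝ ↥(L ⊓ LinearMap.range (LinearMap.inl ℝ V (Module.Dual ℝ V)))) ∧
    Even ((Module.finrank ℝ V : ℤ) -
        Module.finrank ℝ ↥(L ⊓ LinearMap.range (LinearMap.inl ℝ V (Module.Dual ℝ V))) -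
        Module.finrank ℝ ↥(L ⊓ LinearMap.range (LinearMap.inr ℝ V (Module.Dual ℝ V)))) := by
  -- `E := L` and `V := L` make both facts use the `AddCommGroup` instance of `L`, so they mention
  -- syntactically equal ranges.
  obtain ⟨k, hrank⟩ :=
    LinearMap.BilinForm.IsAlt.even_finrank_range (E := L) hL.isAlt_restrict_dualEvalForm
  have hnullity :=
    LinearMap.finrank_range_add_finrank_ker (V := L) ((dualEvalForm ℝ V).restrict L)
  rw [hL.ker_restrict_dualEvalForm,
    (Submodule.comapSubtypeEquivOfLe (sup_le inf_le_left inf_le_left)).finrank_eq,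
    L.finrank_inf_range_inl_sup_inf_range_inr, hrank, hL.1] at hnullity
  have hfst := L.finrank_map_fst_add_finrank_inf_range_inr
  rw [hL.1] at hfst
  exact ⟨⟨k, by omega⟩, ⟨k, by omega⟩⟩
end

section
/- Suppose dim V = 2. Every even Lagrangian subspace L of V ⊕ V* (i.e., with dim(L ∩ V*) even) has type (0,0), with the two exceptions L = V (of type (2,0)) and L = V* (of type (0,2)). That is, if L is Lagrangian and dim(L ∩ V*) is even, then L = V ⊕ 0, or L = 0 ⊕ V*, or L ∩ V = 0 and L ∩ V* = 0. -/
/-- For `dim V = 2`: every even Lagrangian (i.e. `dim(L ∩ V*)` even) has type `(0,0)`,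
except `L = V ⊕ 0` (type `(2,0)`) and `L = 0 ⊕ V*` (type `(0,2)`). -/
theorem even_lagrangian_dim_two
    (V : Type*) [AddCommGroup V] [Module ℝ V] [FiniteDimensional ℝ V]
    (hdim : Module.finrank ℝ V = 2)
    (L : Submodule ℝ (V × Module.Dual ℝ V)) (hL : IsLagrangian L)
    (heven : Even (Module.finrank ℝ
      ↥(L ⊓ LinearMap.range (LinearMap.inr ℝ V (Module.Dual ℝ V))))) :
    L = LinearMap.range (LinearMap.inl ℝ V (Module.Dual ℝ V)) ∨
    L = LinearMap.range (LinearMap.inr ℝ V (Module.Dual ℝ V)) ∨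
    (L ⊓ LinearMap.range (LinearMap.inl ℝ V (Module.Dual ℝ V)) = ⊥ ∧
     L ⊓ LinearMap.range (LinearMap.inr ℝ V (Module.Dual ℝ V)) = ⊥) := by
  classical
  obtain ⟨hrank, hiso⟩ := hL
  have hD : Module.finrank ℝ (Module.Dual ℝ V) = 2 := by
    rw [Subspace.dual_finrank_eq, hdim]
  have hinl : Module.finrank ℝ (LinearMap.range (LinearMap.inl ℝ V (Module.Dual ℝ V))) = 2 := by
    rw [LinearMap.finrank_range_of_inj LinearMap.inl_injective, hdim]
  have hinr : Module.finrank ℝ (LinearMap.range (LinearMap.inr ℝ V (Module.Dual ℝ V))) = 2 := by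
    rw [LinearMap.finrank_range_of_inj LinearMap.inr_injective, hD]
  have hLr : Module.finrank ℝ L = 2 := hrank.trans hdim
  have hle2 : Module.finrank ℝ
      ↥(L ⊓ LinearMap.range (LinearMap.inr ℝ V (Module.Dual ℝ V))) ≤ 2 :=
    (Submodule.finrank_mono inf_le_left).trans_eq hLr
  obtain ⟨k, hk⟩ := heven
  have hcases : Module.finrank ℝ
      ↥(L ⊓ LinearMap.range (LinearMap.inr ℝ V (Module.Dual ℝ V))) = 0 ∨
      Module.finrank ℝ ↥(L ⊓ LinearMap.range (LinearMap.inr ℝ V (Module.Dual ℝ V))) = 2 := by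
    omega
  rcases hcases with h0 | h2
  · -- dim(L ∩ V*) = 0
    have hbotr : L ⊓ LinearMap.range (LinearMap.inr ℝ V (Module.Dual ℝ V)) = ⊥ :=
      Submodule.finrank_eq_zero.mp h0
    by_cases hbotl : L ⊓ LinearMap.range (LinearMap.inl ℝ V (Module.Dual ℝ V)) = ⊥
    · exact Or.inr (Or.inr ⟨hbotl, hbotr⟩)
    -- there is a nonzero (v, 0) ∈ L
    obtain ⟨x, hxmem, hxne⟩ := Submodule.exists_mem_ne_zero_of_ne_bot hbotl
    obtain ⟨hxL, hxinl⟩ := hxmem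
    obtain ⟨v, hv⟩ := hxinl
    have hx2 : x.2 = 0 := by rw [← hv]; rfl
    have hx1 : x.1 = v := by rw [← hv]; rfl
    have hvne : v ≠ 0 := by
      intro h
      apply hxne
      have : x = (v, (0 : Module.Dual ℝ V)) := by
        ext
        · exact hx1
        · simp [hx2]
      rw [this, h]; rfl
    -- L ⊔ range inr = ⊤
    have hsup : L ⊔ LinearMap.range (LinearMap.inr ℝ V (Module.Dual ℝ V)) = ⊤ := by
      apply Submodule.eq_top_of_finrank_eq
      have := Submodule.finrank_sup_add_finrank_inf_eq L
        (LinearMap.range (LinearMap.inr ℝ V (Module.Dual ℝ V)))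
      rw [h0, hLr, hinr] at this
      rw [Module.finrank_prod, hdim, hD]
      omega
    -- projection onto V is surjective on L
    have hsurj : ∀ u : V, ∃ η : Module.Dual ℝ V, ((u, η) : V × Module.Dual ℝ V) ∈ L := by
      intro u
      have hmem : ((u, 0) : V × Module.Dual ℝ V) ∈ L ⊔ LinearMap.range (LinearMap.inr ℝ V (Module.Dual ℝ V)) := by
        rw [hsup]; trivial
      obtain ⟨y, hy, z, hz, hyz⟩ := Submodule.mem_sup.mp hmem
      obtain ⟨ζ, hζ⟩ := hz
      refine ⟨y.2, ?_⟩
      have hy1 : y.1 = u := by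
        have := congrArg Prod.fst hyz
        simp [← hζ] at this
        exact this
      have : ((u, y.2) : V × Module.Dual ℝ V) = y := by rw [← hy1]
      rwa [this]
    -- find w making {v, w} spanning
    have hne_top : Submodule.span ℝ ({v} : Set V) ≠ ⊤ := by
      intro h
      have h1 : Module.finrank ℝ (Submodule.span ℝ ({v} : Set V)) = 1 :=
        finrank_span_singleton hvne
      rw [h, finrank_top, hdim] at h1
      omega
    obtain ⟨w, hw⟩ : ∃ w : V, w ∉ Submodule.span ℝ ({v} : Set V) := by
      by_contra hcon
      push_neg at hcon
      exact hne_top (Submodule.eq_top_iff'.mpr hcon)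
    have hspan : Submodule.span ℝ ({v, w} : Set V) = ⊤ := by
      apply Submodule.eq_top_of_finrank_eq
      have hlt : Submodule.span ℝ ({v} : Set V) < Submodule.span ℝ ({v, w} : Set V) := by
        refine lt_of_le_of_ne (Submodule.span_mono (by simp)) ?_
        intro h
        apply hw
        rw [h]
        exact Submodule.subset_span (by simp)
      have h1 : Module.finrank ℝ (Submodule.span ℝ ({v} : Set V)) = 1 :=
        finrank_span_singleton hvne
      have h2 : Module.finrank ℝ (Submodule.span ℝ ({v} : Set V)) <
          Module.finrank ℝ (Submodule.span ℝ ({v, w} : Set V)) :=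
        Submodule.finrank_lt_finrank_of_lt hlt
      have h3 : Module.finrank ℝ (Submodule.span ℝ ({v, w} : Set V)) ≤ 2 :=
        hdim ▸ Submodule.finrank_le _
      rw [hdim]
      omega
    have hkerzero : ∀ ξ : Module.Dual ℝ V, ξ v = 0 → ξ w = 0 → ξ = 0 := by
      intro ξ h1 h2
      have hle : Submodule.span ℝ ({v, w} : Set V) ≤ LinearMap.ker ξ := by
        rw [Submodule.span_le]
        rintro u (rfl | rfl) <;> simpa
      rw [hspan, top_le_iff] at hle
      exact LinearMap.ker_eq_top.mp hle
    -- key: every element of L has zero dual part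
    have hdualzero : ∀ y ∈ L, (y : V × Module.Dual ℝ V).2 = 0 := by
      intro y hyL
      have hxL' : ((v, (0 : Module.Dual ℝ V)) : V × Module.Dual ℝ V) ∈ L := by
        have : x = (v, (0 : Module.Dual ℝ V)) := by
          ext
          · exact hx1
          · simp [hx2]
        rwa [this] at hxL
      obtain ⟨η', hη'⟩ := hsurj w
      -- η' v = 0
      have hη'v : η' v = 0 := by
        have := hiso _ hη' _ hxL'
        simp only [diracPairing] at this
        simpa using this
      -- η' w = 0
      have hη'w : η' w = 0 := by
        have := hiso _ hη' _ hη'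
        simp only [diracPairing] at this
        linarith
      have hη'0 : η' = 0 := hkerzero η' hη'v hη'w
      -- y.2 v = 0
      have hyv : y.2 v = 0 := by
        have := hiso _ hyL _ hxL'
        simp only [diracPairing] at this
        simpa using this
      -- y.2 w = 0
      have hyw : y.2 w = 0 := by
        have := hiso _ hyL _ hη'
        simp only [diracPairing] at this
        rw [hη'0] at this
        simpa using this
      exact hkerzero _ hyv hyw
    left
    have hle' : L ≤ LinearMap.range (LinearMap.inl ℝ V (Module.Dual ℝ V)) := by
      intro y hy
      refine ⟨y.1, ?_⟩
      have := hdualzero y hy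
      ext
      · rfl
      · simp [this]
    exact Submodule.eq_of_le_of_finrank_eq hle' (by rw [hLr, hinl])
  · -- dim(L ∩ V*) = 2 : L = range inr
    right; left
    have h1 : L ⊓ LinearMap.range (LinearMap.inr ℝ V (Module.Dual ℝ V)) = L :=
      Submodule.eq_of_le_of_finrank_eq inf_le_left (by rw [h2, hLr])
    have hle' : L ≤ LinearMap.range (LinearMap.inr ℝ V (Module.Dual ℝ V)) := by
      rw [← h1]; exact inf_le_right
    exact Submodule.eq_of_le_of_finrank_eq hle' (by rw [hLr, hinr])
end

section
/- Suppose dim V = 2. The map D ↦ D ⊕ Ann(D) is a bijection from the set of 1-dimensional subspaces D of V onto the set of odd Lagrangian subspaces of V ⊕ V* (i.e., Lagrangians L with dim(L ∩ V*) odd), and every odd Lagrangian has type (1,1). -/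
section Helpers

open Module Submodule LinearMap

variable {A B : Type*} [AddCommGroup A] [Module ℝ A] [AddCommGroup B] [Module ℝ B]

private def prodSubEquiv (p : Submodule ℝ A) (q : Submodule ℝ B) :
    ↥(p.prod q) ≃ₗ[ℝ] ↥p × ↥q where
  toFun x := (⟨x.1.1, x.2.1⟩, ⟨x.1.2, x.2.2⟩)
  invFun y := ⟨(y.1, y.2), ⟨y.1.2, y.2.2⟩⟩
  map_add' _ _ := rfl
  map_smul' _ _ := rfl
  left_inv _ := rfl
  right_inv _ := rfl

private lemma finrank_prodSub [FiniteDimensional ℝ A] [FiniteDimensional ℝ B]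
    (p : Submodule ℝ A) (q : Submodule ℝ B) :
    finrank ℝ ↥(p.prod q) = finrank ℝ p + finrank ℝ q := by
  rw [(prodSubEquiv p q).finrank_eq, Module.finrank_prod]

private lemma map_fst_prod (p : Submodule ℝ A) (q : Submodule ℝ B) :
    Submodule.map (LinearMap.fst ℝ A B) (p.prod q) = p := by
  ext d
  constructor
  · rintro ⟨⟨a, b⟩, ⟨ha, hb⟩, rfl⟩; exact ha
  · intro hd; exact ⟨(d, 0), ⟨hd, q.zero_mem⟩, rfl⟩

private lemma range_inl_eq : LinearMap.range (LinearMap.inl ℝ A B) = Submodule.prod ⊤ ⊥ := by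
  ext ⟨a, b⟩
  simp [LinearMap.mem_range, Prod.ext_iff, eq_comm]

private lemma range_inr_eq : LinearMap.range (LinearMap.inr ℝ A B) = Submodule.prod ⊥ ⊤ := by
  ext ⟨a, b⟩
  simp [LinearMap.mem_range, Prod.ext_iff, eq_comm]

private lemma finrank_ann [FiniteDimensional ℝ A] (D : Submodule ℝ A) :
    finrank ℝ D + finrank ℝ D.dualAnnihilator = finrank ℝ A := by
  have h1 := Submodule.finrank_quotient_add_finrank D
  have h2 : finrank ℝ (A ⧸ D) = finrank ℝ D.dualAnnihilator :=
    (Subspace.quotEquivAnnihilator D).finrank_eq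
  omega

end Helpers

open Module Submodule LinearMap

/-- For `dim V = 2`: `D ↦ D ⊕ Ann(D)` is a bijection from the 1-dimensional subspaces
of `V` onto the odd Lagrangians of `V ⊕ V*` (those with `dim(L ∩ V*)` odd), and every
odd Lagrangian has type `(1,1)`. -/
theorem odd_lagrangian_dim_two
    (V : Type*) [AddCommGroup V] [Module ℝ V] [FiniteDimensional ℝ V]
    (hdim : Module.finrank ℝ V = 2) :
    (∀ D : Submodule ℝ V, Module.finrank ℝ D = 1 →
      IsLagrangian (D.prod D.dualAnnihilator) ∧
      Odd (Module.finrank ℝ ↥(D.prod D.dualAnnihilator ⊓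
        LinearMap.range (LinearMap.inr ℝ V (Module.Dual ℝ V))))) ∧
    (∀ L : Submodule ℝ (V × Module.Dual ℝ V), IsLagrangian L →
      Odd (Module.finrank ℝ ↥(L ⊓
        LinearMap.range (LinearMap.inr ℝ V (Module.Dual ℝ V)))) →
      (∃! D : Submodule ℝ V, Module.finrank ℝ D = 1 ∧ L = D.prod D.dualAnnihilator) ∧
      Module.finrank ℝ ↥(L ⊓ LinearMap.range (LinearMap.inl ℝ V (Module.Dual ℝ V))) = 1 ∧
      Module.finrank ℝ ↥(L ⊓ LinearMap.range (LinearMap.inr ℝ V (Module.Dual ℝ V))) = 1) := by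
  have hinrfin : ∀ D : Submodule ℝ V, finrank ℝ D = 1 →
      finrank ℝ ↥(D.prod D.dualAnnihilator ⊓
        LinearMap.range (LinearMap.inr ℝ V (Module.Dual ℝ V))) = 1 ∧
      finrank ℝ ↥(D.prod D.dualAnnihilator ⊓
        LinearMap.range (LinearMap.inl ℝ V (Module.Dual ℝ V))) = 1 := by
    intro D hD
    have hAnn : finrank ℝ D.dualAnnihilator = 1 := by
      have := finrank_ann D; omega
    constructor
    · rw [range_inr_eq, Submodule.prod_inf_prod, inf_bot_eq, inf_top_eq, finrank_prodSub,
        finrank_bot, hAnn]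
    · rw [range_inl_eq, Submodule.prod_inf_prod, inf_top_eq, inf_bot_eq, finrank_prodSub,
        finrank_bot, hD]
  constructor
  · intro D hD
    have hAnn : finrank ℝ D.dualAnnihilator = 1 := by
      have := finrank_ann D; omega
    refine ⟨⟨?_, ?_⟩, ?_⟩
    · rw [finrank_prodSub, hD, hAnn, hdim]
    · rintro ⟨v, ξ⟩ hx ⟨w, η⟩ hy
      have h1 : ξ w = 0 := (Submodule.mem_dualAnnihilator ξ).1 hx.2 w hy.1
      have h2 : η v = 0 := (Submodule.mem_dualAnnihilator η).1 hy.2 v hx.1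
      simp [diracPairing, h1, h2]
    · rw [(hinrfin D hD).1]; exact odd_one
  · intro L hL hodd
    -- dim(L ∩ V*) = 1
    have hLfin : finrank ℝ L = 2 := by rw [hL.1, hdim]
    have hfinle : finrank ℝ ↥(L ⊓ LinearMap.range (LinearMap.inr ℝ V (Module.Dual ℝ V)))
        ≤ finrank ℝ L := Submodule.finrank_mono inf_le_left
    have hker1 : finrank ℝ ↥(L ⊓ LinearMap.range (LinearMap.inr ℝ V (Module.Dual ℝ V))) = 1 := by
      obtain ⟨k, hk⟩ := hodd; omega
    -- D := projection of L to V has dimension 1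
    set D : Submodule ℝ V := Submodule.map (LinearMap.fst ℝ V (Module.Dual ℝ V)) L with hDdef
    have hker1' : finrank ℝ ↥(L ⊓ Submodule.prod (⊥ : Submodule ℝ V)
        (⊤ : Submodule ℝ (Module.Dual ℝ V))) = 1 := by
      rw [← range_inr_eq]; exact hker1
    have hPfin : finrank ℝ ↥(Submodule.prod (⊥ : Submodule ℝ V)
        (⊤ : Submodule ℝ (Module.Dual ℝ V))) = 2 := by
      rw [finrank_prodSub, finrank_bot, finrank_top, Subspace.dual_finrank_eq, hdim]
    have hsup : L ⊔ Submodule.prod (⊥ : Submodule ℝ V) (⊤ : Submodule ℝ (Module.Dual ℝ V))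
        = D.prod ⊤ := by
      apply le_antisymm
      · apply sup_le
        · rintro ⟨v, ξ⟩ hx
          exact ⟨⟨(v, ξ), hx, rfl⟩, trivial⟩
        · rintro ⟨v, ξ⟩ ⟨hv, -⟩
          have hv0 : v = 0 := hv
          exact ⟨hv0 ▸ D.zero_mem, trivial⟩
      · rintro ⟨d, η⟩ ⟨⟨⟨v, ξ⟩, hvL, hvd⟩, -⟩
        obtain rfl : v = d := hvd
        have hdecomp : (v, η) = (v, ξ) + ((0 : V), η - ξ) := by
          ext <;> simp
        rw [hdecomp]
        exact Submodule.add_mem _ (Submodule.mem_sup_left hvL)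
          (Submodule.mem_sup_right ⟨Submodule.zero_mem _, trivial⟩)
    have hD : finrank ℝ D = 1 := by
      have h := Submodule.finrank_sup_add_finrank_inf_eq L
        (Submodule.prod (⊥ : Submodule ℝ V) (⊤ : Submodule ℝ (Module.Dual ℝ V)))
      rw [hsup, finrank_prodSub, finrank_top, Subspace.dual_finrank_eq, hdim] at h
      omega
    have hAnn : finrank ℝ D.dualAnnihilator = 1 := by
      have := finrank_ann D; omega
    -- L ≤ D × Ann D
    have hsub : L ≤ D.prod D.dualAnnihilator := by
      rintro ⟨v, ξ⟩ hx
      have hvD : v ∈ D := ⟨(v, ξ), hx, rfl⟩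
      refine ⟨hvD, (Submodule.mem_dualAnnihilator ξ).2 ?_⟩
      rintro w ⟨⟨w', η⟩, hy, rfl⟩
      show ξ w' = 0
      have hself : ξ v = 0 := by
        have := hL.2 _ hx _ hx
        simp only [diracPairing] at this
        linarith
      by_cases hv : v = 0
      · have := hL.2 _ hx _ hy
        simp only [diracPairing, hv, map_zero] at this
        linarith
      · have hspan : Submodule.span ℝ {v} = D := by
          apply Submodule.eq_of_le_of_finrank_eq
          · rwa [Submodule.span_singleton_le_iff_mem]
          · rw [finrank_span_singleton hv, hD]
        have hw : w' ∈ Submodule.span ℝ {v} := by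
          rw [hspan]; exact ⟨(w', η), hy, rfl⟩
        obtain ⟨c, hc⟩ := Submodule.mem_span_singleton.1 hw
        rw [← hc, map_smul, smul_eq_mul, hself, mul_zero]
    have hLeq : L = D.prod D.dualAnnihilator := by
      apply Submodule.eq_of_le_of_finrank_eq hsub
      rw [hLfin, finrank_prodSub, hD, hAnn]
    refine ⟨⟨D, ⟨hD, hLeq⟩, ?_⟩, ?_, ?_⟩
    · rintro D' ⟨hD', hLeq'⟩
      have : D'.prod D'.dualAnnihilator = D.prod D.dualAnnihilator := by
        rw [← hLeq, ← hLeq']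
      calc D' = Submodule.map (LinearMap.fst ℝ V (Module.Dual ℝ V))
                (D'.prod D'.dualAnnihilator) := (map_fst_prod _ _).symm
        _ = Submodule.map (LinearMap.fst ℝ V (Module.Dual ℝ V))
                (D.prod D.dualAnnihilator) := by rw [this]
        _ = D := map_fst_prod _ _
    · rw [hLeq]; exact (hinrfin D hD).2
    · rw [hLeq]; exact (hinrfin D hD).1
end

section
/- Suppose dim V = 3. If L is a Lagrangian subspace of V ⊕ V* with dim(L ∩ V*) even, then the type of L is (1,0), (3,0), or (1,2); that is, (dim(L ∩ V), dim(L ∩ V*)) ∈ {(1,0), (3,0), (1,2)}. -/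
/-- The type of a Lagrangian `L`: the pair `(dim(L ∩ V), dim(L ∩ V*))`. -/
noncomputable def lagType {V : Type*} [AddCommGroup V] [Module ℝ V]
    (L : Submodule ℝ (V × Module.Dual ℝ V)) : ℕ × ℕ :=
  (Module.finrank ℝ ↥(L ⊓ LinearMap.range (LinearMap.inl ℝ V (Module.Dual ℝ V))),
   Module.finrank ℝ ↥(L ⊓ LinearMap.range (LinearMap.inr ℝ V (Module.Dual ℝ V))))

/-! On a Lagrangian `L` the form `ω(x, y) = ξ_x(v_y)`, for `x = (v_x, ξ_x)`, is alternating,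
and its kernel is `(L ∩ V) ⊕ (L ∩ V*)`: if `ξ_x` annihilates the projection of `L` to `V`, a
dimension count shows that `ξ_x = ξ_z` for some `z ∈ L ∩ V*`, and then `x - z ∈ L ∩ V`.
An alternating form has even rank, so `dim V - dim (L ∩ V) - dim (L ∩ V*)` is even. For
`dim V = 3` and `dim (L ∩ V*)` even this leaves the types `(1,0)`, `(3,0)`, `(1,2)`. -/

open Module

namespace LinearMap.IsAlt

open Matrix

variable {K M : Type*} [Field K] [AddCommGroup M] [Module K M] [FiniteDimensional K M]
  {B : M →ₗ[K] M →ₗ[K] K}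

theorem even_finrank_of_separatingLeft (hB : B.IsAlt) (hsep : B.SeparatingLeft)
    (hK : ringChar K ≠ 2) : Even (finrank K M) := by
  let b := finBasis K M
  let A := LinearMap.toMatrix₂ b b B
  have hdet : A.det ≠ 0 := (LinearMap.separatingLeft_iff_det_ne_zero b).mp hsep
  have hskew : Aᵀ = -A := by
    ext i j
    simp only [A, transpose_apply, Matrix.neg_apply, toMatrix₂_apply, hB.neg]
  have hsign : (-1 : K) ^ finrank K M * A.det = 1 * A.det :=
    calc (-1 : K) ^ finrank K M * A.det = (-A).det := by rw [det_neg, Fintype.card_fin]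
      _ = 1 * A.det := by rw [← hskew, det_transpose, one_mul]
  exact (neg_one_pow_eq_one_iff_even (Ring.neg_one_ne_one_of_char_ne_two hK)).mp
    (mul_right_cancel₀ hdet hsign)

theorem even_finrank_quotient_ker (hB : B.IsAlt) (hK : ringChar K ≠ 2) :
    Even (finrank K (M ⧸ LinearMap.ker B)) := by
  refine even_finrank_of_separatingLeft (B := hB.isRefl.liftQ₂ B (LinearMap.ker B) le_rfl)
    ?_ ?_ hK
  · rintro ⟨x⟩
    exact hB x
  · rintro ⟨x⟩ hx
    rw [Submodule.Quotient.quot_mk_eq_mk, Submodule.Quotient.mk_eq_zero]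
    ext y
    exact hx (Submodule.Quotient.mk y)

end LinearMap.IsAlt

section Lagrangian

variable {V : Type*} [AddCommGroup V] [Module ℝ V] (L : Submodule ℝ (V × Module.Dual ℝ V))

def IsIsotropic : Prop :=
  ∀ x ∈ L, ∀ y ∈ L, diracPairing x y = 0

abbrev lagProjV : L →ₗ[ℝ] V := LinearMap.fst ℝ V (Module.Dual ℝ V) ∘ₗ L.subtype

abbrev lagProjDual : L →ₗ[ℝ] Module.Dual ℝ V := LinearMap.snd ℝ V (Module.Dual ℝ V) ∘ₗ L.subtype

def lagForm : L →ₗ[ℝ] L →ₗ[ℝ] ℝ := LinearMap.lcomp ℝ ℝ (lagProjV L) ∘ₗ lagProjDual L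

@[simp]
theorem lagForm_apply (x y : L) :
    lagForm L x y = (x : V × Module.Dual ℝ V).2 (y : V × Module.Dual ℝ V).1 :=
  rfl

theorem finrank_ker_lagProjV : finrank ℝ (LinearMap.ker (lagProjV L)) = (lagType L).2 := by
  rw [← Submodule.finrank_map_subtype_eq, LinearMap.ker_comp, LinearMap.ker_fst,
    Submodule.map_comap_subtype]
  rfl

theorem finrank_ker_lagProjDual : finrank ℝ (LinearMap.ker (lagProjDual L)) = (lagType L).1 := by
  rw [← Submodule.finrank_map_subtype_eq, LinearMap.ker_comp, LinearMap.ker_snd,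
    Submodule.map_comap_subtype]
  rfl

theorem disjoint_ker_lagProjDual_ker_lagProjV :
    Disjoint (LinearMap.ker (lagProjDual L)) (LinearMap.ker (lagProjV L)) :=
  Submodule.disjoint_def.mpr fun _ hδ hπ => Subtype.ext (Prod.ext hπ hδ)

variable {L}

theorem IsIsotropic.snd_apply_fst_eq_neg (hL : IsIsotropic L) {x y : V × Module.Dual ℝ V}
    (hx : x ∈ L) (hy : y ∈ L) : x.2 y.1 = -y.2 x.1 := by
  have h := hL x hx y hy
  rw [diracPairing] at h
  linarith

theorem IsIsotropic.isAlt_lagForm (hL : IsIsotropic L) : (lagForm L).IsAlt := fun x => by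
  have h := hL.snd_apply_fst_eq_neg x.2 x.2
  rw [lagForm_apply]
  linarith

theorem IsIsotropic.lagForm_eq_zero_of_fst_eq_zero (hL : IsIsotropic L) {x : L}
    (hx : (x : V × Module.Dual ℝ V).1 = 0) : lagForm L x = 0 := by
  ext y
  rw [lagForm_apply, hL.snd_apply_fst_eq_neg x.2 y.2, hx, map_zero, neg_zero,
    LinearMap.zero_apply]

namespace IsLagrangian

theorem isIsotropic (hL : IsLagrangian L) : IsIsotropic L := hL.2

variable [FiniteDimensional ℝ V]

/-- Both sides have dimension `dim V - dim (range (lagProjV L))`, because `dim L = dim V`. -/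
theorem map_ker_lagProjV (hL : IsLagrangian L) :
    (LinearMap.ker (lagProjV L)).map (lagProjDual L) =
      (LinearMap.range (lagProjV L)).dualAnnihilator := by
  apply Submodule.eq_of_le_of_finrank_eq
  · rintro _ ⟨x, hx, rfl⟩
    rw [Submodule.mem_dualAnnihilator]
    rintro _ ⟨y, rfl⟩
    exact LinearMap.congr_fun (hL.isIsotropic.lagForm_eq_zero_of_fst_eq_zero hx) y
  · -- Named carriers: while `↥L` is still a metavariable, the `AddCommMonoid` instance coming
    -- from `Submodule` does not unify with the one through `AddCommGroup`.
    have hinj : Function.Injective ((lagProjDual L).domRestrict (LinearMap.ker (lagProjV L))) :=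
      (LinearMap.injective_domRestrict_iff (M := L) (M₂ := Module.Dual ℝ V)).mpr
        (disjoint_ker_lagProjDual_ker_lagProjV L).symm
    have hmap := LinearMap.finrank_range_of_inj hinj
    rw [LinearMap.range_domRestrict] at hmap
    have hann := Subspace.finrank_add_finrank_dualAnnihilator_eq (LinearMap.range (lagProjV L))
    have hrank := LinearMap.finrank_range_add_finrank_ker (V := L) (lagProjV L)
    rw [hL.1] at hrank
    omega

theorem ker_lagForm (hL : IsLagrangian L) :
    LinearMap.ker (lagForm L) = LinearMap.ker (lagProjDual L) ⊔ LinearMap.ker (lagProjV L) := by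
  apply le_antisymm
  · intro x hx
    have hann : lagProjDual L x ∈ (LinearMap.range (lagProjV L)).dualAnnihilator := by
      rw [Submodule.mem_dualAnnihilator]
      rintro _ ⟨y, rfl⟩
      exact LinearMap.congr_fun hx y
    rw [← hL.map_ker_lagProjV] at hann
    obtain ⟨z, hz, hzx⟩ := hann
    have hxz : x - z ∈ LinearMap.ker (lagProjDual L) := by
      rw [LinearMap.mem_ker, map_sub (lagProjDual L) x z, hzx, sub_self]
    exact Submodule.mem_sup.mpr ⟨x - z, hxz, z, hz, sub_add_cancel x z⟩
  · refine sup_le (fun x hx => ?_) (fun x hx => hL.isIsotropic.lagForm_eq_zero_of_fst_eq_zero hx)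
    replace hx : (x : V × Module.Dual ℝ V).2 = 0 := hx
    ext y
    simp [hx]

theorem exists_lagType_add_two_mul (hL : IsLagrangian L) :
    ∃ k, (lagType L).1 + (lagType L).2 + 2 * k = finrank ℝ V := by
  obtain ⟨k, hk⟩ := hL.isIsotropic.isAlt_lagForm.even_finrank_quotient_ker (M := L) (by simp)
  have hker := Submodule.finrank_sup_add_finrank_inf_eq (V := L) (LinearMap.ker (lagProjDual L))
    (LinearMap.ker (lagProjV L))
  rw [(disjoint_ker_lagProjDual_ker_lagProjV L).eq_bot, finrank_bot, ← hL.ker_lagForm,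
    finrank_ker_lagProjDual, finrank_ker_lagProjV] at hker
  have hquot := Submodule.finrank_quotient_add_finrank (M := L) (LinearMap.ker (lagForm L))
  have hdimL : finrank ℝ L = finrank ℝ V := hL.1
  exact ⟨k, by omega⟩

end IsLagrangian

end Lagrangian

/-- For `dim V = 3`: an even Lagrangian has type `(1,0)`, `(3,0)`, or `(1,2)`. -/
theorem even_lagrangian_types_dim_three
    (V : Type*) [AddCommGroup V] [Module ℝ V] [FiniteDimensional ℝ V]
    (hdim : Module.finrank ℝ V = 3)
    (L : Submodule ℝ (V × Module.Dual ℝ V)) (hL : IsLagrangian L)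
    (heven : Even (lagType L).2) :
    lagType L ∈ ({(1, 0), (3, 0), (1, 2)} : Set (ℕ × ℕ)) := by
  obtain ⟨k, hk⟩ := hL.exists_lagType_add_two_mul
  obtain ⟨j, hj⟩ := heven
  generalize lagType L = t at hk hj ⊢
  obtain ⟨a, b⟩ := t
  simp only [Set.mem_insert_iff, Set.mem_singleton_iff, Prod.mk.injEq]
  omega
end
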